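/- arXiv:0904.1330 — 2 statements merged into one kernel-verified Lean document; each statement's English description precedes it below -/
import Mathlib

section
/- Let φ ∈ ℂ² with φ ≠ 0 and let A : ℝ³ → ℝ³ be a real linear map. If ∑_{i=1}^{3} e_i·((A e_i)·φ) = 0, then A is symmetric with respect to the Euclidean inner product, i.e. ⟨A X, Y⟩ = ⟨X, A Y⟩ for all X, Y ∈ ℝ³. -/
/-- Clifford multiplication of a vector `X ∈ ℝ³` on a spinor `φ ∈ ℂ²`, given by
`X · φ = -i (X₁σ₁ + X₂σ₂ + X₃σ₃) φ` where `σ₁, σ₂, σ₃` are the Pauli matrices. -/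
noncomputable def cliffordMul (X : EuclideanSpace ℝ (Fin 3)) (φ : EuclideanSpace ℂ (Fin 2)) :
    EuclideanSpace ℂ (Fin 2) :=
  (WithLp.equiv 2 (Fin 2 → ℂ)).symm
    ![-Complex.I * ((X 2 : ℂ) * φ 0 + ((X 0 : ℂ) - Complex.I * (X 1 : ℂ)) * φ 1),
      -Complex.I * (((X 0 : ℂ) + Complex.I * (X 1 : ℂ)) * φ 0 - (X 2 : ℂ) * φ 1)]

/-- The standard orthonormal basis vector `e_j` of `ℝ³`. -/
noncomputable def stdVec (j : Fin 3) : EuclideanSpace ℝ (Fin 3) :=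
  EuclideanSpace.single j 1
/-! Clifford multiplication satisfies `X · (Y · φ) = -⟨X, Y⟩ φ + (X × Y) · φ`, so the Dirac
condition says `w · φ = (tr A) φ` for `w = ∑ eᵢ × A eᵢ`, the axial vector of the skew part of `A`.
Multiplying by `w` once more gives `-‖w‖² φ = (tr A)² φ`; as `φ ≠ 0`, this forces `w = 0`. -/

open Matrix

section CliffordMul

variable (X Y : EuclideanSpace ℝ (Fin 3)) (φ : EuclideanSpace ℂ (Fin 2))

theorem cliffordMul_apply_zero :
    cliffordMul X φ 0 = -Complex.I * (X 2 * φ 0 + (X 0 - Complex.I * X 1) * φ 1) :=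
  rfl

theorem cliffordMul_apply_one :
    cliffordMul X φ 1 = -Complex.I * ((X 0 + Complex.I * X 1) * φ 0 - X 2 * φ 1) :=
  rfl

theorem cliffordMul_add_left : cliffordMul (X + Y) φ = cliffordMul X φ + cliffordMul Y φ := by
  ext i
  fin_cases i <;>
  · simp only [Fin.zero_eta, Fin.mk_one, cliffordMul_apply_zero, cliffordMul_apply_one,
      PiLp.add_apply, Complex.ofReal_add]
    ring

theorem cliffordMul_zero_left : cliffordMul 0 φ = 0 := by
  ext i
  fin_cases i <;>
  · simp only [Fin.zero_eta, Fin.mk_one, cliffordMul_apply_zero, cliffordMul_apply_one,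
      PiLp.zero_apply, Complex.ofReal_zero]
    ring

theorem cliffordMul_sum_left {ι : Type*} (s : Finset ι) (v : ι → EuclideanSpace ℝ (Fin 3)) :
    cliffordMul (∑ i ∈ s, v i) φ = ∑ i ∈ s, cliffordMul (v i) φ :=
  map_sum (AddMonoidHom.mk' (cliffordMul · φ) (cliffordMul_add_left · · φ)) v s

theorem cliffordMul_smul_right (c : ℂ) : cliffordMul X (c • φ) = c • cliffordMul X φ := by
  ext i
  fin_cases i <;>
  · simp only [Fin.zero_eta, Fin.mk_one, cliffordMul_apply_zero, cliffordMul_apply_one,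
      PiLp.smul_apply, smul_eq_mul]
    ring

noncomputable def euclideanCross : EuclideanSpace ℝ (Fin 3) :=
  WithLp.toLp 2 (X.ofLp ⨯₃ Y.ofLp)

theorem cliffordMul_cliffordMul :
    cliffordMul X (cliffordMul Y φ) =
      -(inner ℝ X Y : ℂ) • φ + cliffordMul (euclideanCross X Y) φ := by
  ext i
  fin_cases i <;>
  · simp only [Fin.zero_eta, Fin.mk_one, cliffordMul_apply_zero, cliffordMul_apply_one,
      PiLp.add_apply, PiLp.smul_apply, smul_eq_mul, euclideanCross, cross_apply, PiLp.inner_apply,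
      RCLike.inner_apply, conj_trivial, Fin.sum_univ_three, cons_val_zero, cons_val_one, cons_val]
    push_cast
    ring_nf
    simp only [Complex.I_sq, Complex.I_pow_three, Complex.I_pow_four]
    ring

theorem cliffordMul_self : cliffordMul X (cliffordMul X φ) = -((‖X‖ ^ 2 : ℝ) : ℂ) • φ := by
  rw [cliffordMul_cliffordMul, real_inner_self_eq_norm_sq, euclideanCross, cross_self,
    WithLp.toLp_zero, cliffordMul_zero_left, add_zero]

theorem sum_cliffordMul_cliffordMul {ι : Type*} (s : Finset ι)
    (v w : ι → EuclideanSpace ℝ (Fin 3)) :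
    ∑ i ∈ s, cliffordMul (v i) (cliffordMul (w i) φ) =
      cliffordMul (∑ i ∈ s, euclideanCross (v i) (w i)) φ -
        ((∑ i ∈ s, inner ℝ (v i) (w i) : ℝ) : ℂ) • φ := by
  simp only [cliffordMul_cliffordMul, Finset.sum_add_distrib, cliffordMul_sum_left,
    Complex.ofReal_sum, Finset.sum_smul, neg_smul, Finset.sum_neg_distrib]
  abel

variable {X φ}

theorem eq_zero_of_cliffordMul_eq_smul {t : ℝ} (hφ : φ ≠ 0) (h : cliffordMul X φ = (t : ℂ) • φ) :
    t = 0 ∧ X = 0 := by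
  have hsq : ((t ^ 2 + ‖X‖ ^ 2 : ℝ) : ℂ) • φ = 0 := by
    have hself := cliffordMul_self X φ
    rw [h, cliffordMul_smul_right, h, smul_smul] at hself
    push_cast at hself ⊢
    linear_combination (norm := module) hself
  have hsum : t ^ 2 + ‖X‖ ^ 2 = 0 := by
    exact_mod_cast (smul_eq_zero.mp hsq).resolve_right hφ
  constructor
  · nlinarith [sq_nonneg ‖X‖]
  · rw [← norm_eq_zero]
    nlinarith [sq_nonneg t, norm_nonneg X]

end CliffordMul

theorem LinearMap.isSymmetric_of_basis {𝕜 E ι : Type*} [RCLike 𝕜] [SeminormedAddCommGroup E]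
    [InnerProductSpace 𝕜 E] (b : Module.Basis ι 𝕜 E) {T : E →ₗ[𝕜] E}
    (h : ∀ i j, inner 𝕜 (T (b i)) (b j) = inner 𝕜 (b i) (T (b j))) : T.IsSymmetric := by
  have hforms : (innerₛₗ 𝕜).comp T = (innerₛₗ 𝕜 (E := E)).compl₂ T := LinearMap.ext_basis b b h
  exact fun x y => LinearMap.congr_fun₂ hforms x y

theorem isSymmetric_of_sum_euclideanCross_eq_zero
    {A : EuclideanSpace ℝ (Fin 3) →ₗ[ℝ] EuclideanSpace ℝ (Fin 3)}
    (h : ∑ i, euclideanCross (stdVec i) (A (stdVec i)) = 0) : A.IsSymmetric := by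
  have hcomp (k : Fin 3) : (∑ i, euclideanCross (stdVec i) (A (stdVec i))) k = 0 := by
    rw [h]; rfl
  have h12 := hcomp 0
  have h20 := hcomp 1
  have h01 := hcomp 2
  simp only [Fin.sum_univ_three, PiLp.add_apply, euclideanCross, cross_apply, stdVec,
    PiLp.ofLp_single, Pi.single_eq_same, ne_eq, Fin.reduceEq, not_false_eq_true, Pi.single_eq_of_ne,
    cons_val_zero, cons_val_one, cons_val, zero_mul, one_mul, sub_zero, zero_sub, zero_add, add_zero]
    at h12 h20 h01
  refine LinearMap.isSymmetric_of_basis (EuclideanSpace.basisFun (Fin 3) ℝ).toBasis fun i j => ?_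
  simp only [OrthonormalBasis.coe_toBasis, EuclideanSpace.basisFun_apply,
    EuclideanSpace.inner_single_left, EuclideanSpace.inner_single_right, conj_trivial, one_mul]
  fin_cases i <;> fin_cases j <;> simp only [Fin.zero_eta, Fin.mk_one, Fin.reduceFinMk] <;> linarith

theorem dirac_eq_implies_symmetric (φ : EuclideanSpace ℂ (Fin 2)) (hφ : φ ≠ 0)
    (A : EuclideanSpace ℝ (Fin 3) →ₗ[ℝ] EuclideanSpace ℝ (Fin 3))
    (hD : ∑ i : Fin 3, cliffordMul (stdVec i) (cliffordMul (A (stdVec i)) φ) = 0) :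
    ∀ X Y : EuclideanSpace ℝ (Fin 3), (inner ℝ (A X) Y : ℝ) = (inner ℝ X (A Y) : ℝ) := by
  have hcross : cliffordMul (∑ i, euclideanCross (stdVec i) (A (stdVec i))) φ =
      ((∑ i, inner ℝ (stdVec i) (A (stdVec i)) : ℝ) : ℂ) • φ := by
    rw [← sub_eq_zero, ← sum_cliffordMul_cliffordMul, hD]
  exact isSymmetric_of_sum_euclideanCross_eq_zero (eq_zero_of_cliffordMul_eq_smul hφ hcross).2
end

section
/- Let U ⊆ ℝ³ be open and connected and let φ : U → ℂ² be smooth with |φ(x)| = 1 for all x ∈ U. Suppose that φ is harmonic for the Euclidean Dirac operator, i.e. ∑_{j=1}^{3} e_j·(∂φ/∂x_j)(x) = 0 for all x ∈ U, and that its energy-momentum tensor vanishes, i.e. Re⟨φ(x), e_i·(∂φ/∂x_j)(x) + e_j·(∂φ/∂x_i)(x)⟩ = 0 for all i, j ∈ {1,2,3} and all x ∈ U. Then φ is constant on U. -/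
/-- The pointwise linear-algebra heart of the proof, in real coordinates.
`(a,b,c,d)` are re/im parts of the spinor components, `(x_j,y_j,z_j,w_j)` the
re/im parts of the components of the directional derivatives. -/
private lemma key_algebra (a b c d x0 y0 z0 w0 x1 y1 z1 w1 x2 y2 z2 w2 : ℝ)
    (hN : a^2+b^2+c^2+d^2 = 1)
    (hs0 : a*x0 + b*y0 + c*z0 + d*w0 = 0)
    (hs1 : a*x1 + b*y1 + c*z1 + d*w1 = 0)
    (hs2 : a*x2 + b*y2 + c*z2 + d*w2 = 0)
    (hD0r : w0 - z1 + y2 = 0)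
    (hD0i : -z0 - w1 - x2 = 0)
    (hD1r : y0 + x1 - w2 = 0)
    (hD1i : -x0 + y1 + z2 = 0)
    (q00 : a*w0 - b*z0 + c*y0 - d*x0 = 0)
    (q11 : -(a*z1 + b*w1) + c*x1 + d*y1 = 0)
    (q22 : a*y2 - b*x2 - c*w2 + d*z2 = 0)
    (q01 : a*(w1 - z0) + b*(-z1 - w0) + c*(y1 + x0) + d*(-x1 + y0) = 0)
    (q02 : a*(w2 + y0) + b*(-z2 - x0) + c*(y2 - w0) + d*(-x2 + z0) = 0)
    (q12 : a*(-z2 + y1) + b*(-w2 - x1) + c*(x2 - w1) + d*(y2 + z1) = 0) :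
    x0 = 0 ∧ y0 = 0 ∧ z0 = 0 ∧ w0 = 0 ∧ x1 = 0 ∧ y1 = 0 ∧ z1 = 0 ∧ w1 = 0 ∧
      x2 = 0 ∧ y2 = 0 ∧ z2 = 0 ∧ w2 = 0 := by
  have p1 : (-(a*y1 - b*x1 - c*w1 + d*z1)) - (a*z2 + b*w2 - c*x2 - d*y2) = 0 := by
    linear_combination (-c)*hD0i + d*hD0r + (-a)*hD1i + b*hD1r - hs0
  have p2 : (-(c*y2 - d*x2 + a*w2 - b*z2)) - (-(a*y0 - b*x0 - c*w0 + d*z0)) = 0 := by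
    linear_combination (-c)*hD0r + (-d)*hD0i + a*hD1r + b*hD1i - hs1
  have p3 : (a*z0 + b*w0 - c*x0 - d*y0) - (-(c*y1 - d*x1 + a*w1 - b*z1)) = 0 := by
    linear_combination (-a)*hD0i + b*hD0r + c*hD1i + (-d)*hD1r - hs2
  have hB01 : c*y0 - d*x0 + a*w0 - b*z0 = 0 := by linarith
  have hB02 : a*z0 + b*w0 - c*x0 - d*y0 = 0 := by linarith
  have hB03 : a*y0 - b*x0 - c*w0 + d*z0 = 0 := by linarith
  have hB11 : c*y1 - d*x1 + a*w1 - b*z1 = 0 := by linarith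
  have hB12 : a*z1 + b*w1 - c*x1 - d*y1 = 0 := by linarith
  have hB13 : a*y1 - b*x1 - c*w1 + d*z1 = 0 := by linarith
  have hB21 : c*y2 - d*x2 + a*w2 - b*z2 = 0 := by linarith
  have hB22 : a*z2 + b*w2 - c*x2 - d*y2 = 0 := by linarith
  have hB23 : a*y2 - b*x2 - c*w2 + d*z2 = 0 := by linarith
  refine ⟨?_, ?_, ?_, ?_, ?_, ?_, ?_, ?_, ?_, ?_, ?_, ?_⟩
  · linear_combination (-x0)*hN + a*hs0 + (-d)*hB01 + (-c)*hB02 + (-b)*hB03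
  · linear_combination (-y0)*hN + b*hs0 + c*hB01 + (-d)*hB02 + a*hB03
  · linear_combination (-z0)*hN + c*hs0 + (-b)*hB01 + a*hB02 + d*hB03
  · linear_combination (-w0)*hN + d*hs0 + a*hB01 + b*hB02 + (-c)*hB03
  · linear_combination (-x1)*hN + a*hs1 + (-d)*hB11 + (-c)*hB12 + (-b)*hB13
  · linear_combination (-y1)*hN + b*hs1 + c*hB11 + (-d)*hB12 + a*hB13
  · linear_combination (-z1)*hN + c*hs1 + (-b)*hB11 + a*hB12 + d*hB13
  · linear_combination (-w1)*hN + d*hs1 + a*hB11 + b*hB12 + (-c)*hB13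
  · linear_combination (-x2)*hN + a*hs2 + (-d)*hB21 + (-c)*hB22 + (-b)*hB23
  · linear_combination (-y2)*hN + b*hs2 + c*hB21 + (-d)*hB22 + a*hB23
  · linear_combination (-z2)*hN + c*hs2 + (-b)*hB21 + a*hB22 + d*hB23
  · linear_combination (-w2)*hN + d*hs2 + a*hB21 + b*hB22 + (-c)*hB23

theorem harmonic_unit_spinor_with_zero_energy_momentum_is_constant
    (U : Set (EuclideanSpace ℝ (Fin 3))) (hU : IsOpen U) (hconn : IsConnected U)
    (φ : EuclideanSpace ℝ (Fin 3) → EuclideanSpace ℂ (Fin 2))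
    (hsmooth : ContDiffOn ℝ (⊤ : ℕ∞) φ U) (hnorm : ∀ x ∈ U, ‖φ x‖ = 1)
    (hD : ∀ x ∈ U, ∑ j : Fin 3, cliffordMul (stdVec j) (fderiv ℝ φ x (stdVec j)) = 0)
    (hQ : ∀ i j : Fin 3, ∀ x ∈ U,
      (inner ℂ (φ x) (cliffordMul (stdVec i) (fderiv ℝ φ x (stdVec j))
        + cliffordMul (stdVec j) (fderiv ℝ φ x (stdVec i))) : ℂ).re = 0) :
    ∀ x ∈ U, ∀ y ∈ U, φ x = φ y := by
  classical
  -- Step 1: the derivative of `φ` vanishes at each point of `U`.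
  have hzero : ∀ x ∈ U, fderiv ℝ φ x = 0 := by
    intro x hx
    have hmem : U ∈ nhds x := hU.mem_nhds hx
    have hd : DifferentiableAt ℝ φ x :=
      (hsmooth.contDiffAt hmem).differentiableAt (by simp)
    have hF := hd.hasFDerivAt
    have hstd : ∀ j : Fin 3, stdVec j = EuclideanSpace.single j 1 := fun j => rfl
    -- the norm-constancy equation, in real coordinates
    have hs : ∀ v : EuclideanSpace ℝ (Fin 3),
        (φ x 0).re * (fderiv ℝ φ x v 0).re + (φ x 0).im * (fderiv ℝ φ x v 0).im
          + (φ x 1).re * (fderiv ℝ φ x v 1).re + (φ x 1).im * (fderiv ℝ φ x v 1).im = 0 := by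
      intro v
      have hc : ∀ k : Fin 2, HasFDerivAt (fun y => φ y k)
          (((EuclideanSpace.proj k : EuclideanSpace ℂ (Fin 2) →L[ℂ] ℂ).restrictScalars
            ℝ).comp (fderiv ℝ φ x)) x :=
        fun k => (((EuclideanSpace.proj k : EuclideanSpace ℂ (Fin 2) →L[ℂ] ℂ).restrictScalars
          ℝ).hasFDerivAt).comp x hF
      have hre : ∀ k : Fin 2, HasFDerivAt (fun y => (φ y k).re)
          (Complex.reCLM.comp ((((EuclideanSpace.proj k).restrictScalars ℝ)).comp (fderiv ℝ φ x))) x :=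
        fun k => (Complex.reCLM.hasFDerivAt).comp x (hc k)
      have him : ∀ k : Fin 2, HasFDerivAt (fun y => (φ y k).im)
          (Complex.imCLM.comp ((((EuclideanSpace.proj k).restrictScalars ℝ)).comp (fderiv ℝ φ x))) x :=
        fun k => (Complex.imCLM.hasFDerivAt).comp x (hc k)
      have hg := (((hre 0).mul (hre 0)).add ((him 0).mul (him 0))).add
        (((hre 1).mul (hre 1)).add ((him 1).mul (him 1)))
      have hev : (fun y => (fun y => (φ y 0).re * (φ y 0).re + (φ y 0).im * (φ y 0).im) y
          + (fun y => (φ y 1).re * (φ y 1).re + (φ y 1).im * (φ y 1).im) y)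
          =ᶠ[nhds x] (fun _ => (1:ℝ)) := by
        filter_upwards [hmem] with y hy
        have h1 := norm_sq_eq_re_inner (𝕜 := ℂ) (φ y)
        rw [hnorm y hy, PiLp.inner_apply] at h1
        simpa [Fin.sum_univ_two, RCLike.inner_apply, Complex.mul_re,
          RCLike.re_to_complex, ← Complex.ofReal_pow, Complex.sq_norm, Complex.normSq_apply] using h1.symm
      have hzero' : fderiv ℝ (fun y =>
          (fun y => (φ y 0).re * (φ y 0).re + (φ y 0).im * (φ y 0).im) y
          + (fun y => (φ y 1).re * (φ y 1).re + (φ y 1).im * (φ y 1).im) y) x = 0 := by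
        rw [Filter.EventuallyEq.fderiv_eq hev]
        exact fderiv_const_apply 1
      have hG := hg.fderiv
      replace hG := hzero'.symm.trans hG
      have hGv := congrArg (fun (L : EuclideanSpace ℝ (Fin 3) →L[ℝ] ℝ) => L v) hG.symm
      simp only [ContinuousLinearMap.zero_apply, ContinuousLinearMap.add_apply,
        ContinuousLinearMap.smul_apply, ContinuousLinearMap.comp_apply,
        ContinuousLinearMap.coe_restrictScalars', smul_eq_mul, Complex.reCLM_apply,
        Complex.imCLM_apply, PiLp.proj_apply] at hGv
      linarith
    -- the Dirac equation at `x`, componentwise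
    have hDx := hD x hx
    have hD0 := congrArg (fun f => f 0) hDx
    have hD1 := congrArg (fun f => f 1) hDx
    simp only [Fin.sum_univ_three, cliffordMul, stdVec, WithLp.equiv_symm_apply, PiLp.toLp_apply,
      PiLp.add_apply, EuclideanSpace.single_apply, Matrix.cons_val_zero, Matrix.cons_val_one,
      Matrix.head_cons] at hD0 hD1
    norm_num [Fin.ext_iff] at hD0 hD1
    -- the energy-momentum equations at `x`
    have q00 := hQ 0 0 x hx
    have q11 := hQ 1 1 x hx
    have q22 := hQ 2 2 x hx
    have q01 := hQ 0 1 x hx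
    have q02 := hQ 0 2 x hx
    have q12 := hQ 1 2 x hx
    simp only [cliffordMul, stdVec, WithLp.equiv_symm_apply, PiLp.toLp_apply, PiLp.inner_apply,
      PiLp.add_apply, EuclideanSpace.single_apply, Matrix.cons_val_zero, Matrix.cons_val_one,
      Matrix.head_cons, Fin.sum_univ_two, RCLike.inner_apply] at q00 q11 q22 q01 q02 q12
    norm_num [Fin.ext_iff, Complex.add_re, Complex.mul_re, Complex.mul_im, Complex.conj_re,
      Complex.conj_im, Complex.I_re, Complex.I_im] at q00 q11 q22 q01 q02 q12
    -- norm equation at `x`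
    have hN : (φ x 0).re^2 + (φ x 0).im^2 + (φ x 1).re^2 + (φ x 1).im^2 = 1 := by
      have h1 := norm_sq_eq_re_inner (𝕜 := ℂ) (φ x)
      rw [hnorm x hx, PiLp.inner_apply] at h1
      have := h1.symm
      simp only [Fin.sum_univ_two, RCLike.inner_apply, RCLike.re_to_complex, Complex.add_re,
        Complex.mul_re, Complex.conj_re, Complex.conj_im, one_pow] at this
      linarith [this]
    -- apply the key algebraic lemma
    obtain ⟨e1, e2, e3, e4, e5, e6, e7, e8, e9, e10, e11, e12⟩ :=
      key_algebra (φ x 0).re (φ x 0).im (φ x 1).re (φ x 1).im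
        (fderiv ℝ φ x (EuclideanSpace.single 0 1) 0).re
        (fderiv ℝ φ x (EuclideanSpace.single 0 1) 0).im
        (fderiv ℝ φ x (EuclideanSpace.single 0 1) 1).re
        (fderiv ℝ φ x (EuclideanSpace.single 0 1) 1).im
        (fderiv ℝ φ x (EuclideanSpace.single 1 1) 0).re
        (fderiv ℝ φ x (EuclideanSpace.single 1 1) 0).im
        (fderiv ℝ φ x (EuclideanSpace.single 1 1) 1).re
        (fderiv ℝ φ x (EuclideanSpace.single 1 1) 1).im
        (fderiv ℝ φ x (EuclideanSpace.single 2 1) 0).re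
        (fderiv ℝ φ x (EuclideanSpace.single 2 1) 0).im
        (fderiv ℝ φ x (EuclideanSpace.single 2 1) 1).re
        (fderiv ℝ φ x (EuclideanSpace.single 2 1) 1).im
        hN (hs (EuclideanSpace.single 0 1)) (hs (EuclideanSpace.single 1 1))
        (hs (EuclideanSpace.single 2 1))
        (by have := congrArg Complex.re hD0; simpa [sub_eq_add_neg] using this)
        (by have := congrArg Complex.im hD0; simpa [sub_eq_add_neg] using this)
        (by have := congrArg Complex.re hD1; simpa [sub_eq_add_neg] using this)
        (by have := congrArg Complex.im hD1; simpa [sub_eq_add_neg] using this)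
        (by linarith [q00]) (by linarith [q11]) (by linarith [q22])
        (by linarith [q01]) (by linarith [q02]) (by linarith [q12])
    -- conclude `F = 0`
    have hFj : ∀ j : Fin 3, fderiv ℝ φ x (EuclideanSpace.single j 1) = 0 := by
      intro j
      fin_cases j <;>
      · ext k
        fin_cases k <;> [skip; skip] <;>
          first
          | exact Complex.ext (by assumption) (by assumption)
    ext v
    have hv : v = ∑ j : Fin 3, v j • (EuclideanSpace.single j 1 : EuclideanSpace ℝ (Fin 3)) := by
      ext i
      fin_cases i <;>
        simp [EuclideanSpace.single_apply, Fin.sum_univ_three]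
    rw [hv, map_sum]
    simp [hFj]
  -- Step 2: a function with vanishing derivative on an open connected set is constant.
  intro x hx y hy
  have hpre : PreconnectedSpace U := Subtype.preconnectedSpace hconn.isPreconnected
  have hlc : IsLocallyConstant (fun z : U => φ z) := by
    rw [IsLocallyConstant.iff_exists_open]
    rintro ⟨z, hz⟩
    obtain ⟨ε, hε, hball⟩ := Metric.isOpen_iff.1 hU z hz
    refine ⟨Subtype.val ⁻¹' Metric.ball z ε,
      (Metric.isOpen_ball).preimage continuous_subtype_val,
      by simpa using hε, ?_⟩
    rintro ⟨z', hz'U⟩ hz'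
    have hz'b : z' ∈ Metric.ball z ε := by simpa using hz'
    have hconv : Convex ℝ (Metric.ball z ε) := convex_ball z ε
    have hdiff : DifferentiableOn ℝ φ (Metric.ball z ε) := fun w hw =>
      ((hsmooth.contDiffAt (hU.mem_nhds (hball hw))).differentiableAt
        (by simp)).differentiableWithinAt
    have hfd : ∀ w ∈ Metric.ball z ε, fderivWithin ℝ φ (Metric.ball z ε) w = 0 := by
      intro w hw
      rw [fderivWithin_of_isOpen Metric.isOpen_ball hw]
      exact hzero w (hball hw)
    exact hconv.is_const_of_fderivWithin_eq_zero hdiff hfd hz'b (Metric.mem_ball_self hε)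
  exact hlc.apply_eq_of_preconnectedSpace ⟨x, hx⟩ ⟨y, hy⟩
end
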